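/- arXiv:2003.10904 — 4 statements merged into one kernel-verified Lean document; each statement's English description precedes it below -/
import Mathlib

section
/- Let U be a real normed vector space, V a real normed vector space, and B : U × V → ℝ a bilinear form that is continuous with constant M, i.e. |B(w, v)| ≤ M · ‖w‖_U · ‖v‖_V for all w ∈ U, v ∈ V. Suppose u ∈ U solves B(u, v) = F(v) for all v ∈ V and p ∈ V solves B(w, p) = Q(w) for all w ∈ U (F, Q linear). Then for any u_h ∈ U and p_h ∈ V, the error estimator η := F(p_h) − B(u_h, p_h) satisfies |(Q(u) − Q(u_h)) − η| ≤ M · ‖u − u_h‖_U · ‖p − p_h‖_V. -/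
theorem LinearMap.sub_sub_estimator_eq_apply_sub_sub {R U V : Type*} [CommRing R]
    [AddCommGroup U] [Module R U] [AddCommGroup V] [Module R V]
    (B : U →ₗ[R] V →ₗ[R] R) (F : V →ₗ[R] R) (Q : U →ₗ[R] R)
    {u : U} (hu : ∀ v : V, B u v = F v) {p : V} (hp : ∀ w : U, B w p = Q w)
    (u_h : U) (p_h : V) :
    (Q u - Q u_h) - (F p_h - B u_h p_h) = B (u - u_h) (p - p_h) := by
  rw [← hp u, ← hp u_h, ← hu p_h]
  simp only [map_sub, LinearMap.sub_apply]

/-- Continuity bound on the discrepancy between the true error in the quantity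
of interest and the goal-oriented error estimator. -/
theorem estimator_discrepancy_bound
    {U V : Type*} [NormedAddCommGroup U] [NormedSpace ℝ U]
    [NormedAddCommGroup V] [NormedSpace ℝ V]
    (B : U →ₗ[ℝ] V →ₗ[ℝ] ℝ) (M : ℝ)
    (hB : ∀ (w : U) (v : V), |B w v| ≤ M * ‖w‖ * ‖v‖)
    (F : V →ₗ[ℝ] ℝ) (Q : U →ₗ[ℝ] ℝ)
    (u : U) (hu : ∀ v : V, B u v = F v)
    (p : V) (hp : ∀ w : U, B w p = Q w)
    (u_h : U) (p_h : V) :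
    |(Q u - Q u_h) - (F p_h - B u_h p_h)| ≤ M * ‖u - u_h‖ * ‖p - p_h‖ := by
  rw [B.sub_sub_estimator_eq_apply_sub_sub F Q hu hp]
  exact hB _ _
end

section
/- Let U be a real normed vector space, V a real Hilbert space, and B : U × V → ℝ a continuous bilinear form satisfying the inf-sup condition with constant γ > 0: sup_{v ∈ V, v ≠ 0} |B(u, v)| / ‖v‖_V ≥ γ · ‖u‖_U for all u ∈ U. Let T : U → V be the trial-to-test operator with ⟨T u, v⟩_V = B(u, v) for all v ∈ V. Then for every subspace U_h ⊆ U, the discrete inf-sup condition holds with the same constant over the optimal test space V_h := T(U_h): for every u_h ∈ U_h with u_h ≠ 0, sup_{v ∈ V_h, v ≠ 0} |B(u_h, v)| / ‖v‖_V ≥ γ · ‖u_h‖_U. -/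
/-!
Cauchy–Schwarz shows that, for fixed `w`, the quotients `|⟪w, v⟫| / ‖v‖` never exceed `‖w‖`, and
the value `‖w‖` is attained at `v = w`. Since `B u v = ⟪T u, v⟫`, the continuous inf-sup
condition therefore gives `γ ‖u‖ ≤ ‖T u‖`, while for `u ∈ U_h` the optimal test vector `T u`
lies in `T '' U_h`, so the discrete supremum reaches `‖T u‖`.
-/

open RealInnerProductSpace

section InnerSupremum

variable {V : Type*} [NormedAddCommGroup V] [InnerProductSpace ℝ V]

lemma abs_inner_div_norm_le (w v : V) : |⟪w, v⟫| / ‖v‖ ≤ ‖w‖ :=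
  div_le_of_le_mul₀ (norm_nonneg v) (norm_nonneg w) (abs_real_inner_le_norm w v)

lemma iSup_abs_inner_div_norm_le (w : V) (p : V → Prop) :
    ⨆ v : {v : V // p v}, |⟪w, (v : V)⟫| / ‖(v : V)‖ ≤ ‖w‖ :=
  Real.iSup_le (fun v => abs_inner_div_norm_le w v) (norm_nonneg w)

lemma norm_le_iSup_abs_inner_div_norm {w : V} {S : Set V} (hw : w ∈ S) :
    ‖w‖ ≤ ⨆ v : {v : V // v ∈ S ∧ v ≠ 0}, |⟪w, (v : V)⟫| / ‖(v : V)‖ := by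
  by_cases hw0 : w = 0
  · rw [hw0, norm_zero]
    exact Real.iSup_nonneg fun _ => by positivity
  have hbdd : BddAbove (Set.range fun v : {v : V // v ∈ S ∧ v ≠ 0} =>
      |⟪w, (v : V)⟫| / ‖(v : V)‖) :=
    ⟨‖w‖, Set.forall_mem_range.mpr fun v => abs_inner_div_norm_le w v⟩
  have hattained : |⟪w, w⟫| / ‖w‖ = ‖w‖ := by
    rw [real_inner_self_eq_norm_sq, abs_of_nonneg (sq_nonneg _), sq,
      mul_div_cancel_right₀ _ (norm_ne_zero_iff.mpr hw0)]
  exact hattained ▸ le_ciSup hbdd ⟨w, hw, hw0⟩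

end InnerSupremum

theorem discrete_inf_sup_optimal_test_space_general
    {U V : Type*} [NormedAddCommGroup U] [NormedSpace ℝ U]
    [NormedAddCommGroup V] [InnerProductSpace ℝ V]
    (B : U →ₗ[ℝ] V →ₗ[ℝ] ℝ) (γ : ℝ)
    (hinfsup : ∀ u : U,
        γ * ‖u‖ ≤ ⨆ v : {v : V // v ≠ 0}, |B u (v : V)| / ‖(v : V)‖)
    (T : U → V) (hT : ∀ (u : U) (v : V), ⟪T u, v⟫ = B u v)
    (U_h : Submodule ℝ U) :
    ∀ u_h ∈ U_h, u_h ≠ 0 →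
      γ * ‖u_h‖ ≤
        ⨆ v : {v : V // v ∈ T '' (U_h : Set U) ∧ v ≠ 0},
          |B u_h (v : V)| / ‖(v : V)‖ := by
  intro u_h hu_h _
  simp_rw [← hT] at hinfsup ⊢
  calc γ * ‖u_h‖ ≤ ⨆ v : {v : V // v ≠ 0}, |⟪T u_h, (v : V)⟫| / ‖(v : V)‖ := hinfsup u_h
    _ ≤ ‖T u_h‖ := iSup_abs_inner_div_norm_le _ _
    _ ≤ _ := norm_le_iSup_abs_inner_div_norm (Set.mem_image_of_mem T hu_h)

/-- Unconditional discrete stability of the DPG/AVS-FE method: if `B`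
satisfies the inf-sup condition with constant `γ`, then for any trial subspace
`U_h` the discrete inf-sup condition holds with the same constant over the
optimal test space `V_h := T '' U_h`. -/
theorem discrete_inf_sup_optimal_test_space
    {U V : Type*} [NormedAddCommGroup U] [NormedSpace ℝ U]
    [NormedAddCommGroup V] [InnerProductSpace ℝ V] [CompleteSpace V]
    (B : U →ₗ[ℝ] V →ₗ[ℝ] ℝ) (M γ : ℝ) (hγ : 0 < γ)
    (hB : ∀ (u : U) (v : V), |B u v| ≤ M * ‖u‖ * ‖v‖)
    (hinfsup : ∀ u : U,
        γ * ‖u‖ ≤ ⨆ v : {v : V // v ≠ 0}, |B u (v : V)| / ‖(v : V)‖)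
    (T : U → V) (hT : ∀ (u : U) (v : V), ⟪T u, v⟫ = B u v)
    (U_h : Submodule ℝ U) :
    ∀ u_h ∈ U_h, u_h ≠ 0 →
      γ * ‖u_h‖ ≤
        ⨆ v : {v : V // v ∈ T '' (U_h : Set U) ∧ v ≠ 0},
          |B u_h (v : V)| / ‖(v : V)‖ :=
  discrete_inf_sup_optimal_test_space_general B γ hinfsup T hT U_h
end

section
/- Let U be a real normed vector space, V a real Hilbert space, B : U × V → ℝ a continuous bilinear form, and T : U → V the trial-to-test operator with ⟨T u, v⟩_V = B(u, v) for all v ∈ V. Suppose u ∈ U solves B(u, v) = F(v) for all v ∈ V (F linear), and u_h belongs to a subspace U_h ⊆ U and satisfies the discrete problem with optimal test space: B(u_h, T w_h) = F(T w_h) for all w_h ∈ U_h. Then u_h is a best approximation of u in the energy norm: ‖T(u − u_h)‖_V ≤ ‖T(u − w_h)‖_V for all w_h ∈ U_h. -/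
open RealInnerProductSpace

theorem norm_le_norm_add_of_real_inner_eq_zero {V : Type*} [NormedAddCommGroup V]
    [InnerProductSpace ℝ V] {x y : V} (h : ⟪x, y⟫ = 0) : ‖x‖ ≤ ‖x + y‖ := by
  rw [mul_self_le_mul_self_iff (norm_nonneg _) (norm_nonneg _),
    norm_add_sq_eq_norm_sq_add_norm_sq_real h]
  exact le_add_of_nonneg_right (mul_self_nonneg _)

theorem map_add_of_inner_eq_bilinear {U V : Type*} [AddCommGroup U] [Module ℝ U]
    [NormedAddCommGroup V] [InnerProductSpace ℝ V]
    (B : U →ₗ[ℝ] V →ₗ[ℝ] ℝ) {T : U → V} (hT : ∀ (u : U) (v : V), ⟪T u, v⟫ = B u v)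
    (x y : U) : T (x + y) = T x + T y :=
  ext_inner_right ℝ fun v => by rw [inner_add_left, hT, hT, hT, map_add, LinearMap.add_apply]

theorem optimal_test_best_approximation_general
    {U V : Type*} [NormedAddCommGroup U] [NormedSpace ℝ U]
    [NormedAddCommGroup V] [InnerProductSpace ℝ V]
    (B : U →ₗ[ℝ] V →ₗ[ℝ] ℝ)
    (T : U → V) (hT : ∀ (u : U) (v : V), ⟪T u, v⟫ = B u v)
    (F : V →ₗ[ℝ] ℝ)
    (u : U) (hu : ∀ v : V, B u v = F v)
    (U_h : Submodule ℝ U) (u_h : U) (hu_h_mem : u_h ∈ U_h)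
    (hu_h : ∀ w_h ∈ U_h, B u_h (T w_h) = F (T w_h)) :
    ∀ w_h ∈ U_h, ‖T (u - u_h)‖ ≤ ‖T (u - w_h)‖ := by
  intro w_h hw_h
  have galerkin_orthogonality : ∀ w ∈ U_h, ⟪T (u - u_h), T w⟫ = 0 := fun w hw => by
    rw [hT, map_sub, LinearMap.sub_apply, hu, hu_h w hw, sub_self]
  calc ‖T (u - u_h)‖
      ≤ ‖T (u - u_h) + T (u_h - w_h)‖ := norm_le_norm_add_of_real_inner_eq_zero
        (galerkin_orthogonality _ (U_h.sub_mem hu_h_mem hw_h))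
    _ = ‖T (u - w_h)‖ := by rw [← map_add_of_inner_eq_bilinear B hT, sub_add_sub_cancel]

/-- Best-approximation property in the energy norm: the discrete solution
computed with the optimal test space minimizes `‖T (u - w_h)‖` over the trial
subspace `U_h`. -/
theorem optimal_test_best_approximation
    {U V : Type*} [NormedAddCommGroup U] [NormedSpace ℝ U]
    [NormedAddCommGroup V] [InnerProductSpace ℝ V] [CompleteSpace V]
    (B : U →ₗ[ℝ] V →ₗ[ℝ] ℝ) (M : ℝ)
    (hB : ∀ (u : U) (v : V), |B u v| ≤ M * ‖u‖ * ‖v‖)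
    (T : U → V) (hT : ∀ (u : U) (v : V), ⟪T u, v⟫ = B u v)
    (F : V →ₗ[ℝ] ℝ)
    (u : U) (hu : ∀ v : V, B u v = F v)
    (U_h : Submodule ℝ U) (u_h : U) (hu_h_mem : u_h ∈ U_h)
    (hu_h : ∀ w_h ∈ U_h, B u_h (T w_h) = F (T w_h)) :
    ∀ w_h ∈ U_h, ‖T (u - u_h)‖ ≤ ‖T (u - w_h)‖ :=
  optimal_test_best_approximation_general B T hT F u hu U_h u_h hu_h_mem hu_h
end

section
/- Let U be a real normed vector space, V a real Hilbert space, B : U × V → ℝ a continuous bilinear form, and T : U → V the trial-to-test operator with ⟨T u, v⟩_V = B(u, v) for all v ∈ V. Let U_h ⊆ U be a finite-dimensional subspace on which T is injective, and let F : V → ℝ be a continuous linear functional. Then there exists a unique u_h ∈ U_h satisfying the discrete problem with optimal test functions: B(u_h, T w_h) = F(T w_h) for all w_h ∈ U_h. -/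
/-!
The representation identity `⟪T u, v⟫ = B u v` forces `T` to be linear, so the discrete problem
reads `⟪T u_h, T w_h⟫ = F (T w_h)` on the finite-dimensional test space `T(U_h)`. Riesz
representation on `T(U_h)` gives a solution, and the difference of two solutions `u, u'` has
`T (u - u')` orthogonal to `T(U_h) ∋ T (u - u')`, hence zero; injectivity of `T` on `U_h` ends it.
-/

open RealInnerProductSpace

section

variable {U V : Type*} [AddCommGroup U] [Module ℝ U] [NormedAddCommGroup V] [InnerProductSpace ℝ V]

def trialToTestLinearMap (B : U →ₗ[ℝ] V →ₗ[ℝ] ℝ) (T : U → V)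
    (hT : ∀ (u : U) (v : V), ⟪T u, v⟫ = B u v) : U →ₗ[ℝ] V where
  toFun := T
  map_add' u u' := ext_inner_right ℝ fun v => by
    rw [hT, inner_add_left, hT, hT, map_add, LinearMap.add_apply]
  map_smul' c u := ext_inner_right ℝ fun v => by
    rw [hT, RingHom.id_apply, real_inner_smul_left, hT, map_smul, LinearMap.smul_apply, smul_eq_mul]

theorem Submodule.exists_mem_forall_inner_eq (W : Submodule ℝ V) [FiniteDimensional ℝ W]
    (F : V →ₗ[ℝ] ℝ) : ∃ z ∈ W, ∀ y ∈ W, ⟪z, y⟫ = F y := by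
  let f : StrongDual ℝ W := LinearMap.toContinuousLinearMap (F ∘ₗ W.subtype)
  refine ⟨(InnerProductSpace.toDual ℝ W).symm f, Submodule.coe_mem _, fun y hy => ?_⟩
  have hz := InnerProductSpace.toDual_symm_apply (x := (⟨y, hy⟩ : W)) (y := f)
  rwa [Submodule.coe_inner] at hz

theorem exists_mem_forall_inner_map_eq (T : U →ₗ[ℝ] V) (U_h : Submodule ℝ U)
    [FiniteDimensional ℝ U_h] (F : V →ₗ[ℝ] ℝ) :
    ∃ u ∈ U_h, ∀ w ∈ U_h, ⟪T u, T w⟫ = F (T w) := by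
  obtain ⟨z, ⟨u, hu, rfl⟩, hz⟩ := (U_h.map T).exists_mem_forall_inner_eq F
  exact ⟨u, hu, fun w hw => hz (T w) ⟨w, hw, rfl⟩⟩

theorem Set.InjOn.eq_of_forall_inner_map_eq {T : U →ₗ[ℝ] V} {U_h : Submodule ℝ U}
    (hTinj : Set.InjOn T U_h) {u u' : U} (hu : u ∈ U_h) (hu' : u' ∈ U_h)
    (h : ∀ w ∈ U_h, ⟪T u, T w⟫ = ⟪T u', T w⟫) : u = u' := by
  have horth : ⟪T (u - u'), T (u - u')⟫ = 0 := by
    rw [map_sub, inner_sub_left, ← map_sub, h _ (U_h.sub_mem hu hu'), sub_self]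
  rw [inner_self_eq_zero, map_sub, sub_eq_zero] at horth
  exact hTinj hu hu' horth

theorem existsUnique_mem_forall_inner_map_eq {T : U →ₗ[ℝ] V} {U_h : Submodule ℝ U}
    [FiniteDimensional ℝ U_h] (hTinj : Set.InjOn T U_h) (F : V →ₗ[ℝ] ℝ) :
    ∃! u : U, u ∈ U_h ∧ ∀ w ∈ U_h, ⟪T u, T w⟫ = F (T w) := by
  obtain ⟨u, hu, hsol⟩ := exists_mem_forall_inner_map_eq T U_h F
  refine ⟨u, ⟨hu, hsol⟩, fun u' ⟨hu', hsol'⟩ => ?_⟩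
  exact hTinj.eq_of_forall_inner_map_eq hu' hu fun w hw => by rw [hsol w hw, hsol' w hw]

end

theorem discrete_problem_exists_unique_general
    {U V : Type*} [NormedAddCommGroup U] [NormedSpace ℝ U]
    [NormedAddCommGroup V] [InnerProductSpace ℝ V]
    (B : U →ₗ[ℝ] V →ₗ[ℝ] ℝ)
    (T : U → V) (hT : ∀ (u : U) (v : V), ⟪T u, v⟫ = B u v)
    (U_h : Submodule ℝ U) [FiniteDimensional ℝ U_h]
    (hTinj : Set.InjOn T (U_h : Set U))
    (F : V →L[ℝ] ℝ) :
    ∃! u_h : U, u_h ∈ U_h ∧ ∀ w_h ∈ U_h, B u_h (T w_h) = F (T w_h) := by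
  let Tₗ := trialToTestLinearMap B T hT
  have hB : ∀ u w : U, B u (T w) = ⟪Tₗ u, Tₗ w⟫ := fun u w => (hT u (T w)).symm
  simp only [hB]
  exact existsUnique_mem_forall_inner_map_eq (T := Tₗ) hTinj F.toLinearMap

/-- Existence and uniqueness of the discrete AVS-FE/DPG solution on a
finite-dimensional trial subspace on which the trial-to-test operator is
injective. -/
theorem discrete_problem_exists_unique
    {U V : Type*} [NormedAddCommGroup U] [NormedSpace ℝ U]
    [NormedAddCommGroup V] [InnerProductSpace ℝ V] [CompleteSpace V]
    (B : U →ₗ[ℝ] V →ₗ[ℝ] ℝ) (M : ℝ)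
    (hB : ∀ (u : U) (v : V), |B u v| ≤ M * ‖u‖ * ‖v‖)
    (T : U → V) (hT : ∀ (u : U) (v : V), ⟪T u, v⟫ = B u v)
    (U_h : Submodule ℝ U) [FiniteDimensional ℝ U_h]
    (hTinj : Set.InjOn T (U_h : Set U))
    (F : V →L[ℝ] ℝ) :
    ∃! u_h : U, u_h ∈ U_h ∧ ∀ w_h ∈ U_h, B u_h (T w_h) = F (T w_h) :=
  discrete_problem_exists_unique_general B T hT U_h hTinj F
end
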